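/- Let p ≥ 1 and let G be a {P3 ∪ P2, (K1 ∪ K2) + Kp}-free graph with ω(G) ≥ max{3, 3p−1}. Then χ(G) ≤ ω(G) + p − 1. -/

import Mathlib

/-!
Fix a maximum clique `K`, so `#K = ω`; every vertex misses some vertex of `K`. A vertex whose
only non-neighbour in `K` is `a`, its anchor (each `a ∈ K` is its own anchor), gets colour `a`:
two such vertices with the same anchor are non-adjacent, since together with `K - a` they would
form a clique of size `ω + 1`. A vertex `b` missing two vertices of `K` sees fewer than `p`
vertices of `K`, or it forms `(K₁ ∪ K₂) + K_p` with them, and for a similar reason fewer than `p`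
anchors occur among its neighbours (the blocked anchors of `b`). So `b` keeps at least `ω` of the
`ω + p - 1` colours `K ⊕ Fin (p - 1)`. These vertices `b` induce a disjoint union of cliques: the
three vertices of an induced `P₃` among them see at most `3p - 3 ≤ ω - 2` vertices of `K`, so
they miss an edge of `K` and give `P₃ ∪ P₂`. Each of them therefore has fewer than `ω` such
neighbours, and they can be coloured greedily from their lists.
-/

open SimpleGraph

/-- The join of two graphs: all cross edges present. -/
def joinG {α β : Type*} (G : SimpleGraph α) (H : SimpleGraph β) : SimpleGraph (α ⊕ β) :=
  SimpleGraph.fromRel (fun x y => match x, y with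
    | Sum.inl a, Sum.inl b => G.Adj a b
    | Sum.inr a, Sum.inr b => H.Adj a b
    | Sum.inl _, Sum.inr _ => True
    | _, _ => False)

/-- The graph `P₃ ∪ P₂`: disjoint union of a path on 3 vertices and an edge. -/
def P3P2 : SimpleGraph (Fin 3 ⊕ Fin 2) := pathGraph 3 ⊕g pathGraph 2

/-- The graph `K₁ ∪ K₂`: disjoint union of a vertex and an edge. -/
def K1K2 : SimpleGraph (Fin 1 ⊕ Fin 2) := (⊥ : SimpleGraph (Fin 1)) ⊕g (⊤ : SimpleGraph (Fin 2))

/-- The graph `(K₁ ∪ K₂) + Kₚ`: join of `K₁ ∪ K₂` with a complete graph on `p` vertices. -/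
def K1K2Kp (p : ℕ) : SimpleGraph ((Fin 1 ⊕ Fin 2) ⊕ Fin p) := joinG K1K2 (⊤ : SimpleGraph (Fin p))

/-- The graph `2K₁ + Kₚ`: join of two isolated vertices with a complete graph on `p` vertices. -/
def twoK1Kp (p : ℕ) : SimpleGraph (Fin 2 ⊕ Fin p) :=
  joinG (⊥ : SimpleGraph (Fin 2)) (⊤ : SimpleGraph (Fin p))

/-- The HVN graph: `(K₁ ∪ K₂) + K₂`. -/
def HVN : SimpleGraph ((Fin 1 ⊕ Fin 2) ⊕ Fin 2) := K1K2Kp 2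

/-- The diamond: `2K₁ + K₂`, i.e. `K₄` minus an edge. -/
def diamond : SimpleGraph (Fin 2 ⊕ Fin 2) := twoK1Kp 2

/-- The paw: `(K₁ ∪ K₂) + K₁`. -/
def paw : SimpleGraph ((Fin 1 ⊕ Fin 2) ⊕ Fin 1) := K1K2Kp 1

/-- `G` is `H`-free if it has no induced subgraph isomorphic to `H`,
i.e. there is no graph embedding of `H` into `G`. -/
def Free {α β : Type*} (H : SimpleGraph α) (G : SimpleGraph β) : Prop :=
  ¬ Nonempty (H ↪g G)

section Embeddings

variable {α β V : Type*} {H₁ : SimpleGraph α} {H₂ : SimpleGraph β} {G : SimpleGraph V}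

@[simp] lemma joinG_adj_inl_inl {a a' : α} :
    (joinG H₁ H₂).Adj (.inl a) (.inl a') ↔ H₁.Adj a a' := by
  simp only [joinG, fromRel_adj, ne_eq, Sum.inl.injEq]
  exact ⟨fun h => h.2.elim id H₁.adj_symm, fun h => ⟨h.ne, .inl h⟩⟩

@[simp] lemma joinG_adj_inr_inr {b b' : β} :
    (joinG H₁ H₂).Adj (.inr b) (.inr b') ↔ H₂.Adj b b' := by
  simp only [joinG, fromRel_adj, ne_eq, Sum.inr.injEq]
  exact ⟨fun h => h.2.elim id H₂.adj_symm, fun h => ⟨h.ne, .inl h⟩⟩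

@[simp] lemma joinG_adj_inl_inr {a : α} {b : β} : (joinG H₁ H₂).Adj (.inl a) (.inr b) := by
  simp [joinG]

@[simp] lemma joinG_adj_inr_inl {a : α} {b : β} : (joinG H₁ H₂).Adj (.inr b) (.inl a) := by
  simp [joinG]

namespace SimpleGraph.Embedding

def sumElim (f : H₁ ↪g G) (g : H₂ ↪g G) (hne : ∀ a b, f a ≠ g b)
    (hadj : ∀ a b, ¬ G.Adj (f a) (g b)) : H₁ ⊕g H₂ ↪g G where
  toFun := Sum.elim f g
  inj' := f.injective.sumElim g.injective hne
  map_rel_iff' := by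
    rintro (a | b) (a' | b') <;> simp [hadj, fun a b => mt G.adj_symm (hadj a b)]

def joinElim (f : H₁ ↪g G) (g : H₂ ↪g G) (hadj : ∀ a b, G.Adj (f a) (g b)) :
    joinG H₁ H₂ ↪g G where
  toFun := Sum.elim f g
  inj' := f.injective.sumElim g.injective fun a b => (hadj a b).ne
  map_rel_iff' := by
    rintro (a | b) (a' | b') <;> simp [hadj, fun a b => G.adj_symm (hadj a b)]

end SimpleGraph.Embedding

lemma SimpleGraph.IsNClique.exists_topEmbedding {n : ℕ} {s : Finset V} (hs : G.IsNClique n s) :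
    ∃ e : (⊤ : SimpleGraph (Fin n)) ↪g G, ∀ i, e i ∈ s := by
  let e := (Finset.equivFinOfCardEq hs.card_eq).symm
  refine ⟨⟨⟨fun i => e i, fun i j h => e.injective (Subtype.ext h)⟩, ?_⟩,
    fun i => (e i).2⟩
  intro i j
  simp only [top_adj]
  refine ⟨fun h hij => h.ne (by rw [hij]), fun hij => hs.isClique (e i).2 (e j).2 ?_⟩
  exact fun h => hij (e.injective (Subtype.ext h))

lemma SimpleGraph.Adj.isNClique_pair [DecidableEq V] {s t : V} (h : G.Adj s t) :
    G.IsNClique 2 {s, t} :=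
  ⟨by simpa using fun _ => h, Finset.card_pair h.ne⟩

lemma exists_pathGraph_three_embedding {u v w : V} (huv : G.Adj u v) (hvw : G.Adj v w)
    (huw : ¬ G.Adj u w) (hne : u ≠ w) :
    ∃ e : pathGraph 3 ↪g G, ∀ i, e i ∈ ({u, v, w} : Set V) := by
  refine ⟨⟨⟨![u, v, w], ?_⟩, ?_⟩, fun i => ?_⟩
  · intro i j h
    fin_cases i <;> fin_cases j <;> simp_all [huv.ne, hvw.ne, huv.ne.symm, hvw.ne.symm, hne.symm]
  · intro i j
    change G.Adj (![u, v, w] i) (![u, v, w] j) ↔ _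
    fin_cases i <;> fin_cases j <;> simp [pathGraph_adj, huv, hvw, huw, adj_comm]
  · change ![u, v, w] i ∈ _
    fin_cases i <;> simp

lemma not_free_P3P2 {u v w s t : V} (huv : G.Adj u v) (hvw : G.Adj v w) (huw : ¬ G.Adj u w)
    (hne : u ≠ w) (hst : G.Adj s t)
    (hsep : ∀ x ∈ ({u, v, w} : Set V), ∀ y ∈ ({s, t} : Set V), ¬ G.Adj x y) :
    ¬ _root_.Free P3P2 G := by
  classical
  obtain ⟨e, he⟩ := exists_pathGraph_three_embedding huv hvw huw hne
  obtain ⟨e', he'⟩ := hst.isNClique_pair.exists_topEmbedding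
  have hnadj : ∀ i j, ¬ G.Adj (e i) (e' j) := fun i j => hsep _ (he i) _ (by simpa using he' j)
  have hdisj : ∀ i j, e i ≠ e' j := fun i j h =>
    hnadj i (j + 1) (h ▸ e'.map_adj_iff.mpr (by simp))
  rw [P3P2, pathGraph_two_eq_top]
  exact not_not.mpr ⟨Embedding.sumElim e e' hdisj hnadj⟩

lemma not_free_K1K2Kp {p : ℕ} {Q : Finset V} {x y z : V} (hQ : G.IsNClique p Q)
    (hyz : G.Adj y z) (hxy : ¬ G.Adj x y) (hxz : ¬ G.Adj x z)
    (hQadj : ∀ q ∈ Q, G.Adj x q ∧ G.Adj y q ∧ G.Adj z q) : ¬ _root_.Free (K1K2Kp p) G := by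
  classical
  let ex : (⊥ : SimpleGraph (Fin 1)) ↪g G :=
    ⟨⟨fun _ => x, fun i j _ => Subsingleton.elim i j⟩, by simp⟩
  obtain ⟨eyz, heyz⟩ := hyz.isNClique_pair.exists_topEmbedding
  obtain ⟨eQ, heQ⟩ := hQ.exists_topEmbedding
  have hxyz : ∀ j, ¬ G.Adj x (eyz j) ∧ x ≠ eyz j := by
    intro j
    rcases (by simpa using heyz j : eyz j = y ∨ eyz j = z) with h | h <;> rw [h]
    exacts [⟨hxy, fun h => hxz (h ▸ hyz)⟩, ⟨hxz, fun h => hxy (h ▸ hyz.symm)⟩]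
  let eK1K2 : K1K2 ↪g G :=
    Embedding.sumElim ex eyz (fun _ j => (hxyz j).2) (fun _ j => (hxyz j).1)
  refine not_not.mpr ⟨Embedding.joinElim eK1K2 eQ ?_⟩
  rintro (_ | j) i
  · exact (hQadj _ (heQ i)).1
  · rcases (by simpa using heyz j : eyz j = y ∨ eyz j = z) with h | h
    · exact h ▸ (hQadj _ (heQ i)).2.1
    · exact h ▸ (hQadj _ (heQ i)).2.2

end Embeddings

namespace SimpleGraph

open Finset

variable {V : Type*} (G : SimpleGraph V)

open scoped Classical in
noncomputable def neighborsIn (K : Finset V) (v : V) : Finset V := {a ∈ K | G.Adj v a}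

open scoped Classical in
noncomputable def nonNeighborsIn (K : Finset V) (v : V) : Finset V := {a ∈ K | ¬ G.Adj v a}

open scoped Classical in
noncomputable def blockedAnchors (K : Finset V) (b : V) : Finset V :=
  {a ∈ K | ∃ v, G.Adj b v ∧ G.nonNeighborsIn K v = {a}}

variable {G} {K : Finset V} {p : ℕ}

@[simp] lemma mem_neighborsIn {v a : V} : a ∈ G.neighborsIn K v ↔ a ∈ K ∧ G.Adj v a := by
  simp [neighborsIn]

@[simp] lemma mem_nonNeighborsIn {v a : V} :
    a ∈ G.nonNeighborsIn K v ↔ a ∈ K ∧ ¬ G.Adj v a := by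
  simp [nonNeighborsIn]

@[simp] lemma mem_blockedAnchors {b a : V} :
    a ∈ G.blockedAnchors K b ↔ a ∈ K ∧ ∃ v, G.Adj b v ∧ G.nonNeighborsIn K v = {a} := by
  simp [blockedAnchors]

lemma adj_of_nonNeighborsIn_eq_singleton {v a q : V} (hv : G.nonNeighborsIn K v = {a})
    (hq : q ∈ K) (hne : q ≠ a) : G.Adj v q := by
  by_contra h
  exact hne (Finset.mem_singleton.mp (hv ▸ mem_nonNeighborsIn.mpr ⟨hq, h⟩))

lemma mem_of_nonNeighborsIn_eq_singleton {v a : V} (hv : G.nonNeighborsIn K v = {a}) : a ∈ K :=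
  (mem_nonNeighborsIn.mp (hv ▸ Finset.mem_singleton_self a)).1

lemma not_adj_of_nonNeighborsIn_eq_singleton {v a : V} (hv : G.nonNeighborsIn K v = {a}) :
    ¬ G.Adj v a :=
  (mem_nonNeighborsIn.mp (hv ▸ Finset.mem_singleton_self a)).2

section CliqueInFreeGraph

variable (hK : G.IsClique K)
include hK

/-- Otherwise `v`, the edge `u b` and `p` vertices of `K - {a, b}` span `(K₁ ∪ K₂) + K_p`. -/
lemma adj_of_nonNeighborsIn_ne (hf : _root_.Free (K1K2Kp p) G) (hcard : p + 2 ≤ #K)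
    {u v a b : V} (hu : G.nonNeighborsIn K u = {a}) (hv : G.nonNeighborsIn K v = {b})
    (hab : a ≠ b) : G.Adj u v := by
  classical
  by_contra huv
  obtain ⟨Q, hQ, hQcard⟩ : ∃ Q ⊆ K \ {a, b}, #Q = p := exists_subset_card_eq <| by
    have := le_card_sdiff {a, b} K
    have := card_le_two (a := a) (b := b)
    omega
  have hQ' : ∀ q ∈ Q, q ∈ K ∧ q ≠ a ∧ q ≠ b := fun q hq => by
    simpa [not_or] using hQ hq
  have hbK := mem_of_nonNeighborsIn_eq_singleton hv
  refine not_free_K1K2Kp (x := v) ⟨hK.subset fun q hq => (hQ' q hq).1, hQcard⟩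
    (adj_of_nonNeighborsIn_eq_singleton hu hbK hab.symm) (fun h => huv h.symm)
    (not_adj_of_nonNeighborsIn_eq_singleton hv) (fun q hq => ?_) hf
  obtain ⟨hqK, hqa, hqb⟩ := hQ' q hq
  exact ⟨adj_of_nonNeighborsIn_eq_singleton hv hqK hqb,
    adj_of_nonNeighborsIn_eq_singleton hu hqK hqa, hK hbK hqK (Ne.symm hqb)⟩

lemma card_neighborsIn_lt (hf : _root_.Free (K1K2Kp p) G) {v : V}
    (hv : 2 ≤ #(G.nonNeighborsIn K v)) : #(G.neighborsIn K v) < p := by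
  by_contra! h
  obtain ⟨Q, hQ, hQcard⟩ := exists_subset_card_eq h
  obtain ⟨y, hy, z, hz, hyz⟩ := one_lt_card.mp hv
  rw [mem_nonNeighborsIn] at hy hz
  have hQ' : ∀ q ∈ Q, q ∈ K ∧ G.Adj v q := fun q hq => mem_neighborsIn.mp (hQ hq)
  refine not_free_K1K2Kp ⟨hK.subset fun q hq => (hQ' q hq).1, hQcard⟩ (hK hy.1 hz.1 hyz)
    hy.2 hz.2 (fun q hq => ?_) hf
  obtain ⟨hqK, hvq⟩ := hQ' q hq
  exact ⟨hvq, hK hy.1 hqK (by rintro rfl; exact hy.2 hvq),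
    hK hz.1 hqK (by rintro rfl; exact hz.2 hvq)⟩

lemma adj_trans_of_card_neighborsIn_lt (hf : _root_.Free P3P2 G) (hcard : 3 * p ≤ #K + 1)
    {x y z : V} (hx : #(G.neighborsIn K x) < p) (hy : #(G.neighborsIn K y) < p)
    (hz : #(G.neighborsIn K z) < p) (hxy : G.Adj x y) (hyz : G.Adj y z) (hxz : x ≠ z) :
    G.Adj x z := by
  classical
  by_contra hn
  set N := G.neighborsIn K x ∪ G.neighborsIn K y ∪ G.neighborsIn K z
  have hR : ∀ c ∈ K \ N, ∀ w ∈ ({x, y, z} : Set V), ¬ G.Adj w c := by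
    intro c hc w hw
    simp only [N, mem_sdiff, mem_union, mem_neighborsIn, not_or, not_and] at hc
    rcases hw with rfl | rfl | rfl
    exacts [hc.2.1.1 hc.1, hc.2.1.2 hc.1, hc.2.2 hc.1]
  have : 2 ≤ #(K \ N) := by
    have hN : #N ≤ #(G.neighborsIn K x) + #(G.neighborsIn K y) + #(G.neighborsIn K z) :=
      (card_union_le _ _).trans (Nat.add_le_add_right (card_union_le _ _) _)
    have := le_card_sdiff N K
    omega
  obtain ⟨s, hs, t, ht, hst⟩ := one_lt_card.mp this
  refine not_free_P3P2 hxy hyz hn hxz (hK (mem_sdiff.mp hs).1 (mem_sdiff.mp ht).1 hst)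
    (fun w hw c hc => ?_) hf
  rcases (by simpa using hc : c = s ∨ c = t) with rfl | rfl
  exacts [hR _ hs w hw, hR _ ht w hw]

/-- Neighbours of `b` witnessing `p` blocked anchors form a `p`-clique, as their anchors differ;
two vertices of `K` that `b` misses and that are not among these anchors complete a
`(K₁ ∪ K₂) + K_p`. -/
lemma card_blockedAnchors_lt (hf : _root_.Free (K1K2Kp p) G) (hp : 1 ≤ p)
    (hcard : 2 * p + 1 ≤ #K) {b : V} (hb : #(G.neighborsIn K b) < p) :
    #(G.blockedAnchors K b) < p := by
  classical
  by_contra! h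
  obtain ⟨S, hS, hScard⟩ := exists_subset_card_eq h
  have hSK : ∀ a ∈ S, a ∈ K := fun a ha => (mem_blockedAnchors.mp (hS ha)).1
  choose! w hbw hw using fun a (ha : a ∈ S) => (mem_blockedAnchors.mp (hS ha)).2
  have hwadj : ∀ a ∈ S, ∀ a' ∈ S, a ≠ a' → G.Adj (w a) (w a') := fun a ha a' ha' hne =>
    adj_of_nonNeighborsIn_ne hK hf (by omega) (hw a ha) (hw a' ha') hne
  have hW : G.IsNClique p (S.image w) := by
    refine ⟨?_, ?_⟩
    · rintro _ hx _ hy hne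
      rw [coe_image] at hx hy
      obtain ⟨a, ha, rfl⟩ := hx
      obtain ⟨a', ha', rfl⟩ := hy
      exact hwadj a ha a' ha' (by rintro rfl; exact hne rfl)
    · rw [card_image_of_injOn fun a ha a' ha' h =>
        by_contra fun hne => (hwadj a ha a' ha' hne).ne h, hScard]
  have hR : ∀ c ∈ K \ (G.neighborsIn K b ∪ S), c ∈ K ∧ ¬ G.Adj b c ∧ c ∉ S := by
    intro c hc
    simp only [mem_sdiff, mem_union, mem_neighborsIn, not_or, not_and] at hc
    exact ⟨hc.1, hc.2.1 hc.1, hc.2.2⟩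
  have : 2 ≤ #(K \ (G.neighborsIn K b ∪ S)) := by
    have := le_card_sdiff (G.neighborsIn K b ∪ S) K
    have := card_union_le (G.neighborsIn K b) S
    omega
  obtain ⟨s, hs, t, ht, hst⟩ := one_lt_card.mp this
  obtain ⟨hsK, hbs, hsS⟩ := hR s hs
  obtain ⟨htK, hbt, htS⟩ := hR t ht
  refine not_free_K1K2Kp hW (hK hsK htK hst) hbs hbt (fun q hq => ?_) hf
  obtain ⟨a, ha, rfl⟩ := mem_image.mp hq
  exact ⟨hbw a ha,
    (adj_of_nonNeighborsIn_eq_singleton (hw a ha) hsK (by rintro rfl; exact hsS ha)).symm,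
    (adj_of_nonNeighborsIn_eq_singleton (hw a ha) htK (by rintro rfl; exact htS ha)).symm⟩

end CliqueInFreeGraph

lemma card_lt_cliqueNum_of_forall_adj [Finite V] {T : Finset V} (hT : G.IsClique T) {b : V}
    (hb : ∀ u ∈ T, G.Adj b u) : #T < G.cliqueNum := by
  classical
  have h := hT.insert fun u hu _ => hb u hu
  rw [← coe_insert] at h
  have := h.card_le_cliqueNum
  rwa [card_insert_of_notMem fun h => G.loopless.irrefl b (hb b h)] at this

section MaximumClique

variable [Fintype V] (hK : G.IsNClique G.cliqueNum K)
include hK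

lemma IsNClique.exists_not_adj_of_cliqueNum (v : V) : ∃ a ∈ K, ¬ G.Adj v a := by
  classical
  by_contra! h
  have := (hK.insert h).isClique.card_le_cliqueNum
  rw [(hK.insert h).card_eq] at this
  omega

lemma two_le_card_nonNeighborsIn {v : V} (hv : #(G.nonNeighborsIn K v) ≠ 1) :
    2 ≤ #(G.nonNeighborsIn K v) := by
  obtain ⟨a, ha, hva⟩ := hK.exists_not_adj_of_cliqueNum v
  have : 0 < #(G.nonNeighborsIn K v) := card_pos.mpr ⟨a, mem_nonNeighborsIn.mpr ⟨ha, hva⟩⟩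
  omega

lemma not_adj_of_nonNeighborsIn_eq {u v a : V} (hu : G.nonNeighborsIn K u = {a})
    (hv : G.nonNeighborsIn K v = {a}) : ¬ G.Adj u v := by
  classical
  intro huv
  have haK := mem_of_nonNeighborsIn_eq_singleton hu
  have hvK : ∀ q ∈ K.erase a, G.Adj v q := fun q hq =>
    adj_of_nonNeighborsIn_eq_singleton hv (mem_of_mem_erase hq) (ne_of_mem_erase hq)
  have hs := (hK.erase_of_mem haK).insert hvK
  rw [Nat.sub_add_cancel (card_pos.mpr ⟨a, haK⟩ |>.trans_eq hK.card_eq)] at hs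
  obtain ⟨q, hq, huq⟩ := hs.exists_not_adj_of_cliqueNum u
  rcases mem_insert.mp hq with rfl | hq
  · exact huq huv
  · exact huq (adj_of_nonNeighborsIn_eq_singleton hu (mem_of_mem_erase hq) (ne_of_mem_erase hq))

end MaximumClique

theorem exists_listColoring_of_card_lt {C : Type*} [Nonempty C] (H : SimpleGraph V)
    [DecidableRel H.Adj] (S : Finset V) (L : V → Finset C)
    (hL : ∀ v ∈ S, #{u ∈ S | H.Adj v u} < #(L v)) :
    ∃ f : V → C, (∀ v ∈ S, f v ∈ L v) ∧
      ∀ u ∈ S, ∀ v ∈ S, H.Adj u v → f u ≠ f v := by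
  classical
  suffices ∀ T ⊆ S, ∃ f : V → C, (∀ v ∈ T, f v ∈ L v) ∧
      ∀ u ∈ T, ∀ v ∈ T, H.Adj u v → f u ≠ f v from this S subset_rfl
  intro T hT
  induction T using Finset.induction_on with
  | empty => exact ⟨fun _ => Classical.arbitrary C, by simp, by simp⟩
  | insert a T haT ih =>
    have hTS := (subset_insert a T).trans hT
    obtain ⟨f, hfL, hfadj⟩ := ih hTS
    obtain ⟨c, hcL, hcf⟩ : ∃ c ∈ L a, c ∉ {u ∈ T | H.Adj a u}.image f :=
      exists_mem_notMem_of_card_lt_card <| card_image_le.trans_lt <|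
        (card_le_card (filter_subset_filter _ hTS)).trans_lt (hL a (hT (mem_insert_self a T)))
    have hc : ∀ v ∈ T, H.Adj a v → c ≠ f v := fun v hv hav h =>
      hcf (mem_image.mpr ⟨v, mem_filter.mpr ⟨hv, hav⟩, h.symm⟩)
    have hupd : ∀ v ∈ T, Function.update f a c v = f v := fun v hv =>
      Function.update_of_ne (ne_of_mem_of_not_mem hv haT) c f
    refine ⟨Function.update f a c, fun v hv => ?_, fun u hu v hv huv => ?_⟩
    · rcases mem_insert.mp hv with rfl | hv
      · simpa using hcL
      · exact hupd v hv ▸ hfL v hv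
    · rcases mem_insert.mp hu with rfl | huT <;> rcases mem_insert.mp hv with rfl | hvT
      · exact absurd huv (H.loopless.irrefl _)
      · simpa [hupd v hvT] using hc v hvT huv
      · simpa [hupd u huT] using (hc u huT huv.symm).symm
      · simpa [hupd u huT, hupd v hvT] using hfadj u huT v hvT huv

section Coloring

variable [Fintype V] (hK : G.IsNClique G.cliqueNum K) (hf1 : _root_.Free P3P2 G)
  (hf2 : _root_.Free (K1K2Kp p) G) (hp : 1 ≤ p) (hω : 2 * p + 1 ≤ G.cliqueNum)
  (hω' : 3 * p ≤ G.cliqueNum + 1)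
include hK hf1 hf2 hp hω hω'

lemma exists_coloring_avoiding_blockedAnchors :
    ∃ f : V → V ⊕ Fin (p - 1),
      (∀ v, #(G.nonNeighborsIn K v) ≠ 1 →
        f v ∈ K.disjSum univ ∧ ∀ a ∈ G.blockedAnchors K v, f v ≠ .inl a) ∧
      ∀ u v, #(G.nonNeighborsIn K u) ≠ 1 → #(G.nonNeighborsIn K v) ≠ 1 → G.Adj u v →
        f u ≠ f v := by
  classical
  have hKcard := hK.card_eq
  have hfar : ∀ v, #(G.nonNeighborsIn K v) ≠ 1 → #(G.neighborsIn K v) < p := fun v hv =>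
    card_neighborsIn_lt hK.isClique hf2 (two_le_card_nonNeighborsIn hK hv)
  let far : Finset V := {v | #(G.nonNeighborsIn K v) ≠ 1}
  let L : V → Finset (V ⊕ Fin (p - 1)) := fun b =>
    K.disjSum univ \ (G.blockedAnchors K b).map .inl
  have : Nonempty (V ⊕ Fin (p - 1)) := by
    obtain ⟨a, -⟩ := card_pos.mp (show 0 < #K by omega)
    exact ⟨.inl a⟩
  obtain ⟨f, hfL, hfadj⟩ := exists_listColoring_of_card_lt G far L fun b hb => by
    have hb := hfar b (mem_filter.mp hb).2
    have hT : G.IsClique (({u ∈ far | G.Adj b u} : Finset V) : Set V) := by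
      intro u hu v hv huv
      simp only [far, coe_filter, mem_filter, mem_univ, true_and, Set.mem_ofPred_eq] at hu hv
      exact adj_trans_of_card_neighborsIn_lt hK.isClique hf1 (by omega) (hfar u hu.1) hb
        (hfar v hv.1) hu.2.symm hv.2 huv
    have hLb : G.cliqueNum ≤ #(L b) := by
      have hsdiff : #(K.disjSum univ) - #((G.blockedAnchors K b).map .inl) ≤ #(L b) :=
        le_card_sdiff _ _
      have := card_blockedAnchors_lt hK.isClique hf2 hp (by omega) hb
      simp only [card_map, card_disjSum, card_univ, Fintype.card_fin] at hsdiff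
      omega
    exact (card_lt_cliqueNum_of_forall_adj hT fun u hu => (mem_filter.mp hu).2).trans_le hLb
  refine ⟨f, fun v hv => ?_, fun u v hu hv =>
    hfadj u (by simpa [far] using hu) v (by simpa [far] using hv)⟩
  obtain ⟨hpal, hblocked⟩ := mem_sdiff.mp (hfL v (by simpa [far] using hv))
  exact ⟨hpal, fun a ha h => hblocked (h ▸ mem_map_of_mem _ ha)⟩

theorem colorable_cliqueNum_add_sub_one : G.Colorable (G.cliqueNum + p - 1) := by
  classical
  choose! anchor hanchor using fun v (hv : #(G.nonNeighborsIn K v) = 1) => card_eq_one.mp hv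
  obtain ⟨f, hfL, hfadj⟩ := exists_coloring_avoiding_blockedAnchors hK hf1 hf2 hp hω hω'
  let c : V → V ⊕ Fin (p - 1) := fun v =>
    if #(G.nonNeighborsIn K v) = 1 then .inl (anchor v) else f v
  have hc_mem : ∀ v, c v ∈ K.disjSum univ := by
    intro v
    by_cases hv : #(G.nonNeighborsIn K v) = 1
    · simpa [c, hv] using mem_of_nonNeighborsIn_eq_singleton (hanchor v hv)
    · simpa [c, hv] using (hfL v hv).1
  have hc_near_far : ∀ u v, G.Adj u v → #(G.nonNeighborsIn K u) = 1 →
      #(G.nonNeighborsIn K v) ≠ 1 → c u ≠ c v := by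
    intro u v huv hu hv h
    have hblocked : anchor u ∈ G.blockedAnchors K v :=
      mem_blockedAnchors.mpr ⟨mem_of_nonNeighborsIn_eq_singleton (hanchor u hu), u, huv.symm,
        hanchor u hu⟩
    simp only [c, hu, hv, if_true, if_false] at h
    exact (hfL v hv).2 _ hblocked h.symm
  have hc_adj : ∀ u v, G.Adj u v → c u ≠ c v := by
    intro u v huv
    by_cases hu : #(G.nonNeighborsIn K u) = 1 <;> by_cases hv : #(G.nonNeighborsIn K v) = 1
    · simp only [c, hu, hv, if_true, ne_eq, Sum.inl.injEq]
      exact fun h => not_adj_of_nonNeighborsIn_eq hK (hanchor u hu) (h ▸ hanchor v hv) huv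
    · exact hc_near_far u v huv hu hv
    · exact (hc_near_far v u huv.symm hv hu).symm
    · simpa [c, hu, hv] using hfadj u v hu hv huv
  have := (Coloring.mk (fun v => (⟨c v, hc_mem v⟩ : K.disjSum univ))
    fun huv h => hc_adj _ _ huv (congrArg Subtype.val h)).colorable
  rwa [Fintype.card_coe, card_disjSum, card_univ, Fintype.card_fin, hK.card_eq,
    ← Nat.add_sub_assoc hp] at this

end Coloring

end SimpleGraph

theorem stmt_6 {V : Type*} [Fintype V] (G : SimpleGraph V) (p : ℕ) (hp : 1 ≤ p)
    (hf1 : _root_.Free P3P2 G) (hf2 : _root_.Free (K1K2Kp p) G)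
    (hω : max 3 (3 * p - 1) ≤ G.cliqueNum) :
    G.chromaticNumber ≤ (G.cliqueNum + p - 1 : ℕ) := by
  have h3 := le_of_max_le_left hω
  have h3p := le_of_max_le_right hω
  obtain ⟨K, hK⟩ := G.exists_isNClique_cliqueNum
  exact (colorable_cliqueNum_add_sub_one hK hf1 hf2 hp (by omega) (by omega)).chromaticNumber_le
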